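/- Let β > 1. For Lebesgue-almost every x ∈ [0,1), liminf_{n→∞} (log T_β^n(x))/(log n) = −1, where T_β^n is the n-fold iterate of the β-transformation. -/

import Mathlib

open Filter Real MeasureTheory Set

/-- The β-transformation T_β(x) = βx - ⌊βx⌋. -/
noncomputable def bT (β x : ℝ) : ℝ := β * x - ⌊β * x⌋

/-- The k-th digit (0-based: `bDigit β x k = ε_{k+1}(x)`) of the β-expansion. -/
noncomputable def bDigit (β x : ℝ) (k : ℕ) : ℤ := ⌊β * ((bT β)^[k] x)⌋

/-- The n-th convergent ω_n(x) = Σ_{k=1}^n ε_k(x)/β^k. -/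
noncomputable def bConv (β x : ℝ) (n : ℕ) : ℝ :=
  ∑ k ∈ Finset.range n, (bDigit β x k : ℝ) / β ^ (k + 1)

/-- ℓ_n(x): length of the longest run of zero digits just after the n-th digit. -/
noncomputable def ellRun (β x : ℝ) (n : ℕ) : ℕ :=
  sSup {k : ℕ | ∀ j < k, bDigit β x (n + j) = 0}

/-- r_n(x): maximal length of a run of zeros within the first n digits. -/
noncomputable def runMax (β x : ℝ) (n : ℕ) : ℕ :=
  sSup {k : ℕ | ∃ i, i + k ≤ n ∧ ∀ j < k, bDigit β x (i + j) = 0}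

/-!
Cut `[0, 1)` into the cylinders of length `s`, the sets of points with prescribed first `s`
digits. A nonempty cylinder is an interval on which `T_β^s` is affine with slope `β ^ s`, onto
some `[0, τ)` with `τ ≤ 1`; as the tops `τ` add up to `β ^ s`, there are at most
`β ^ (s + 1) / (β - 1)` cylinders. Hence `vol {T_β^n x < a} ≤ β / (β - 1) * a`, and the first
Borel–Cantelli lemma gives `T_β^n x ≥ n ^ (-γ)` eventually, for every `γ > 1`.

Conversely, conditionally on the first `t` digits, `T_β^t x < c` has probability at least `c`.
Put disjoint windows of `w_m ≈ δ log_β m` digits (`γ < δ < 1`) at positions `n_m = (m + 1) w_m`.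
Since `∑ β ^ (-w_m) ≈ ∑ m ^ (-δ)` diverges, Lévy's conditional Borel–Cantelli lemma shows that
almost surely infinitely many windows consist of zeros, and then
`T_β^{n_m} x < β ^ (-w_m) ≤ n_m ^ (-γ)`.
-/

open scoped ENNReal Topology

section ConditionalBorelCantelli

variable {Ω : Type*} {m₀ : MeasurableSpace Ω} {μ : Measure Ω} [IsFiniteMeasure μ]

lemma ae_le_condExp_indicator {m : MeasurableSpace Ω} (hm : m ≤ m₀) {A : Set Ω}
    (hA : MeasurableSet[m₀] A) {c : ℝ} (hc : 0 ≤ c)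
    (h : ∀ B, MeasurableSet[m] B → ENNReal.ofReal c * μ B ≤ μ (A ∩ B)) :
    ∀ᵐ ω ∂μ, c ≤ μ[A.indicator 1 | m] ω := by
  have hint : Integrable (A.indicator (1 : Ω → ℝ)) μ := (integrable_const 1).indicator hA
  refine ae_of_ae_trim hm (ae_le_of_forall_setIntegral_le (integrable_const c)
    (integrable_condExp.trim hm stronglyMeasurable_condExp) fun B hB _ => ?_)
  rw [← setIntegral_trim hm stronglyMeasurable_const hB,
    ← setIntegral_trim hm stronglyMeasurable_condExp hB, setIntegral_condExp hm hint hB,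
    setIntegral_const, smul_eq_mul, setIntegral_indicator hA, Pi.one_def, setIntegral_const,
    smul_eq_mul, mul_one, inter_comm, mul_comm, measureReal_def, measureReal_def]
  have := ENNReal.toReal_mono (measure_ne_top μ _) (h B hB)
  rwa [ENNReal.toReal_mul, ENNReal.toReal_ofReal hc] at this

theorem ae_frequently_mem_of_not_summable {ℱ : Filtration ℕ m₀} {s : ℕ → Set Ω} {p : ℕ → ℝ}
    (hs : ∀ n, MeasurableSet[ℱ n] (s n)) (hp : ∀ n, 0 ≤ p n) (hp_sum : ¬Summable p)
    (hcond : ∀ n B, MeasurableSet[ℱ n] B → ENNReal.ofReal (p n) * μ B ≤ μ (s (n + 1) ∩ B)) :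
    ∀ᵐ ω ∂μ, ∃ᶠ n in atTop, ω ∈ s n := by
  have hce : ∀ᵐ ω ∂μ, ∀ n, p n ≤ μ[(s (n + 1)).indicator 1 | ℱ n] ω :=
    ae_all_iff.2 fun n =>
      ae_le_condExp_indicator (ℱ.le n) (ℱ.le _ _ (hs (n + 1))) (hp n) (hcond n)
  have hdiv := (not_summable_iff_tendsto_nat_atTop_of_nonneg hp).1 hp_sum
  filter_upwards [ae_mem_limsup_atTop_iff μ hs, hce] with ω hlevy hω
  rw [← mem_limsup_iff_frequently_mem, hlevy]
  exact tendsto_atTop_mono (fun n => Finset.sum_le_sum fun k _ => hω k) hdiv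

end ConditionalBorelCantelli

lemma liminf_eq_of_eventually_of_frequently {ι : Type*} {l : Filter ι} {u : ι → ℝ} {a : ℝ}
    {ε : ℕ → ℝ} (hε : Tendsto ε atTop (𝓝 0)) (hlow : ∀ j, ∀ᶠ i in l, a - ε j ≤ u i)
    (hup : ∀ j, ∃ᶠ i in l, u i ≤ a + ε j) : liminf u l = a := by
  have hbdd : IsBoundedUnder (· ≥ ·) l u := ⟨a - ε 0, hlow 0⟩
  have hcobdd : IsCoboundedUnder (· ≥ ·) l u := IsCoboundedUnder.of_frequently_le (hup 0)
  refine le_antisymm ?_ ?_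
  · refine ge_of_tendsto (by simpa using hε.const_add a) (Eventually.of_forall fun j => ?_)
    exact liminf_le_of_frequently_le (hup j) hbdd
  · refine le_of_tendsto (by simpa using hε.const_sub a) (Eventually.of_forall fun j => ?_)
    exact le_liminf_of_le hcobdd (hlow j)

lemma rpow_eq_rpow_mul_logb {b x : ℝ} (hb₀ : 0 < b) (hb₁ : b ≠ 1) (hx : 0 < x) (r : ℝ) :
    x ^ r = b ^ (r * logb b x) := by
  rw [mul_comm, Real.rpow_mul hb₀.le, Real.rpow_logb hb₀ hb₁ hx]

section Digits

variable {β x : ℝ}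

lemma bT_mem_Ico (β x : ℝ) : bT β x ∈ Ico (0 : ℝ) 1 :=
  ⟨Int.fract_nonneg _, Int.fract_lt_one _⟩

lemma iterate_bT_mem_Ico_of_pos {n : ℕ} (hn : 0 < n) : (bT β)^[n] x ∈ Ico (0 : ℝ) 1 := by
  obtain ⟨k, rfl⟩ := Nat.exists_eq_succ_of_ne_zero hn.ne'
  rw [Function.iterate_succ_apply']
  exact bT_mem_Ico _ _

lemma iterate_bT_mem_Ico (hx : x ∈ Ico (0 : ℝ) 1) : ∀ n, (bT β)^[n] x ∈ Ico (0 : ℝ) 1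
  | 0 => hx
  | n + 1 => iterate_bT_mem_Ico_of_pos n.succ_pos

lemma iterate_bT_nonneg (hx : 0 ≤ x) : ∀ n, 0 ≤ (bT β)^[n] x
  | 0 => hx
  | n + 1 => (iterate_bT_mem_Ico_of_pos n.succ_pos).1

lemma iterate_succ_bT (β x : ℝ) (n : ℕ) :
    (bT β)^[n + 1] x = β * (bT β)^[n] x - bDigit β x n := by
  rw [Function.iterate_succ_apply']; rfl

lemma bDigit_add (β x : ℝ) (s k : ℕ) : bDigit β x (s + k) = bDigit β ((bT β)^[s] x) k := by
  rw [bDigit, bDigit, add_comm, Function.iterate_add_apply]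

lemma bDigit_succ (β x : ℝ) (k : ℕ) : bDigit β x (k + 1) = bDigit β (bT β x) k := by
  rw [add_comm, bDigit_add, Function.iterate_one]

lemma bDigit_nonneg (hβ : 0 ≤ β) (hx : 0 ≤ x) (k : ℕ) : 0 ≤ bDigit β x k :=
  Int.floor_nonneg.2 (mul_nonneg hβ (iterate_bT_nonneg hx k))

lemma bDigit_mem_Icc (hβ : 0 ≤ β) (hx : x ∈ Ico (0 : ℝ) 1) (k : ℕ) :
    bDigit β x k ∈ Finset.Icc 0 ⌊β⌋ := by
  have hT := iterate_bT_mem_Ico (β := β) hx k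
  refine Finset.mem_Icc.2 ⟨bDigit_nonneg hβ hx.1 k, Int.floor_le_floor ?_⟩
  exact mul_le_of_le_one_right hβ hT.2.le

lemma bConv_nonneg (hβ : 0 ≤ β) (hx : 0 ≤ x) (n : ℕ) : 0 ≤ bConv β x n :=
  Finset.sum_nonneg fun k _ => div_nonneg (Int.cast_nonneg (bDigit_nonneg hβ hx k))
    (pow_nonneg hβ _)

lemma bConv_congr {y : ℝ} {n : ℕ} (h : ∀ i < n, bDigit β y i = bDigit β x i) :
    bConv β y n = bConv β x n :=
  Finset.sum_congr rfl fun i hi => by rw [h i (Finset.mem_range.1 hi)]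

lemma bConv_succ (β x : ℝ) (n : ℕ) :
    bConv β x (n + 1) = bConv β x n + bDigit β x n / β ^ (n + 1) :=
  Finset.sum_range_succ _ _

lemma iterate_bT_eq (hβ : β ≠ 0) (x : ℝ) (n : ℕ) :
    (bT β)^[n] x = β ^ n * (x - bConv β x n) := by
  induction n with
  | zero => simp [bConv]
  | succ n ih =>
    rw [iterate_succ_bT, ih, bConv_succ]
    field_simp
    ring

lemma bDigit_eq_of_bConv_le_of_le (hβ : 0 < β) (hx : 0 ≤ x) {y : ℝ} {n : ℕ}
    (h₁ : bConv β x n ≤ y) (h₂ : y ≤ x) : ∀ i < n, bDigit β y i = bDigit β x i := by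
  induction n with
  | zero => intro i hi; omega
  | succ n ih =>
    have hsucc := bConv_succ β x n
    have hdn : (0 : ℝ) ≤ bDigit β x n / β ^ (n + 1) :=
      div_nonneg (Int.cast_nonneg (bDigit_nonneg hβ.le hx n)) (by positivity)
    have hprev := ih (by linarith)
    have hy : β * (bT β)^[n] y = β ^ (n + 1) * (y - bConv β x n) := by
      rw [iterate_bT_eq hβ.ne', bConv_congr hprev]; ring
    have hx' : β * (bT β)^[n] x = β ^ (n + 1) * (x - bConv β x n) := by
      rw [iterate_bT_eq hβ.ne']; ring
    have hlow : (bDigit β x n : ℝ) ≤ β * (bT β)^[n] y := by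
      rw [hy, ← div_le_iff₀' (by positivity)]; linarith
    have hup : β * (bT β)^[n] y ≤ β * (bT β)^[n] x := by
      rw [hy, hx']; gcongr
    have hn : bDigit β y n = bDigit β x n :=
      le_antisymm (Int.floor_le_floor hup) (Int.le_floor.2 hlow)
    intro i hi
    rcases Nat.lt_succ_iff_lt_or_eq.1 hi with hi | rfl
    exacts [hprev i hi, hn]

lemma forall_bDigit_eq_zero_iff (hβ : 1 < β) (hx : x ∈ Ico (0 : ℝ) 1) (k : ℕ) :
    (∀ j < k, bDigit β x j = 0) ↔ x < (β ^ k)⁻¹ := by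
  induction k generalizing x with
  | zero => simpa using hx.2
  | succ k ih =>
    have hβx : 0 ≤ β * x := mul_nonneg (by linarith) hx.1
    have hT : β * x < 1 → bT β x = β * x := fun h => by
      simp [bT, Int.floor_eq_zero_iff.2 ⟨hβx, h⟩]
    have hk : (β ^ k)⁻¹ ≤ 1 := inv_le_one_of_one_le₀ (one_le_pow₀ hβ.le)
    have hrhs : x < (β ^ (k + 1))⁻¹ ↔ β * x < (β ^ k)⁻¹ := by
      rw [pow_succ', mul_inv, ← div_eq_inv_mul, lt_div_iff₀ (by linarith), mul_comm]
    have h0 : bDigit β x 0 = 0 ↔ β * x < 1 := by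
      simp [bDigit, Int.floor_eq_zero_iff, hβx]
    simp only [Nat.forall_lt_succ_left, bDigit_succ, ih (bT_mem_Ico β x), h0, hrhs]
    constructor
    · rintro ⟨h1, h2⟩; rwa [hT h1] at h2
    · intro h
      have h1 := h.trans_le hk
      exact ⟨h1, by rwa [hT h1]⟩

end Digits

section Cylinders

variable {β : ℝ}

lemma measurable_bT (β : ℝ) : Measurable (bT β) :=
  measurable_fract.comp (measurable_const_mul β)

lemma measurable_iterate_bT (β : ℝ) (n : ℕ) : Measurable (bT β)^[n] :=
  (measurable_bT β).iterate n

lemma measurable_bDigit (β : ℝ) (k : ℕ) : Measurable (bDigit β · k) :=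
  ((measurable_iterate_bT β k).const_mul β).floor

noncomputable def bWord (β : ℝ) (s : ℕ) (x : ℝ) : Fin s → ℤ := fun i => bDigit β x i

def cylinder (β : ℝ) (s : ℕ) (v : Fin s → ℤ) : Set ℝ := Ico 0 1 ∩ bWord β s ⁻¹' {v}

/-- A nonempty cylinder is the interval `[ω, ω + cylinderTop β s v / β ^ s)`, with `ω` the common
`s`-th convergent of its points, and `T_β^s` maps it onto `[0, cylinderTop β s v)` by
`x ↦ β ^ s * (x - ω)`. -/
noncomputable def cylinderTop (β : ℝ) (s : ℕ) (v : Fin s → ℤ) : ℝ :=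
  sSup ((bT β)^[s] '' cylinder β s v)

lemma measurable_bWord (β : ℝ) (s : ℕ) : Measurable (bWord β s) :=
  measurable_pi_lambda _ fun _ => measurable_bDigit β _

lemma measurableSet_cylinder (β : ℝ) (s : ℕ) (v : Fin s → ℤ) : MeasurableSet (cylinder β s v) :=
  measurableSet_Ico.inter (measurable_bWord β s (measurableSet_singleton v))

lemma cylinderTop_nonneg (s : ℕ) (v : Fin s → ℤ) : 0 ≤ cylinderTop β s v :=
  Real.sSup_nonneg <| by
    rintro _ ⟨x, hx, rfl⟩
    exact (iterate_bT_mem_Ico hx.1 s).1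

lemma cylinderTop_le_one (s : ℕ) (v : Fin s → ℤ) : cylinderTop β s v ≤ 1 :=
  Real.sSup_le (by rintro _ ⟨x, hx, rfl⟩; exact (iterate_bT_mem_Ico hx.1 s).2.le) zero_le_one

lemma iterate_le_cylinderTop {s : ℕ} {v : Fin s → ℤ} {x : ℝ} (hx : x ∈ cylinder β s v) :
    (bT β)^[s] x ≤ cylinderTop β s v := by
  refine le_csSup ⟨1, ?_⟩ ⟨x, hx, rfl⟩
  rintro _ ⟨y, hy, rfl⟩
  exact (iterate_bT_mem_Ico hy.1 s).2.le

lemma bConv_eq_of_mem_cylinder {s : ℕ} {v : Fin s → ℤ} {x y : ℝ} (hx : x ∈ cylinder β s v)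
    (hy : y ∈ cylinder β s v) : bConv β x s = bConv β y s :=
  bConv_congr fun i hi => congrFun (hx.2.trans hy.2.symm) ⟨i, hi⟩

lemma Ico_subset_cylinder_inter (hβ : 0 < β) {s : ℕ} {v : Fin s → ℤ} {x₀ : ℝ}
    (hx₀ : x₀ ∈ cylinder β s v) (a : ℝ) :
    Ico (bConv β x₀ s) (bConv β x₀ s + min (cylinderTop β s v) a / β ^ s) ⊆
      cylinder β s v ∩ {x | (bT β)^[s] x < a} := by
  rintro z ⟨hz₁, hz₂⟩
  -- some `y` in the cylinder lies above `z`, and `z` inherits the first `s` digits of `y`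
  have hu : β ^ s * (z - bConv β x₀ s) < min (cylinderTop β s v) a := by
    rw [← lt_div_iff₀' (by positivity)]; linarith
  obtain ⟨_, ⟨y, hy, rfl⟩, hzy⟩ :=
    exists_lt_of_lt_csSup ((nonempty_of_mem hx₀).image _) (hu.trans_le (min_le_left _ _))
  have hω := bConv_eq_of_mem_cylinder hy hx₀
  rw [iterate_bT_eq hβ.ne', hω] at hzy
  have hzy' : z ≤ y := by linarith [lt_of_mul_lt_mul_left hzy (by positivity)]
  have hdig := bDigit_eq_of_bConv_le_of_le hβ hy.1.1 (hω.symm ▸ hz₁) hzy'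
  refine ⟨⟨⟨?_, hzy'.trans_lt hy.1.2⟩, funext fun i => (hdig i i.2).trans (congrFun hy.2 i)⟩, ?_⟩
  · linarith [bConv_nonneg hβ.le hx₀.1.1 s]
  · show (bT β)^[s] z < a
    rw [iterate_bT_eq hβ.ne', bConv_congr hdig, hω]
    exact hu.trans_le (min_le_right _ _)

lemma cylinder_inter_subset_Icc (hβ : 0 < β) {s : ℕ} {v : Fin s → ℤ} {x₀ : ℝ}
    (hx₀ : x₀ ∈ cylinder β s v) (a : ℝ) :
    cylinder β s v ∩ {x | (bT β)^[s] x < a} ⊆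
      Icc (bConv β x₀ s) (bConv β x₀ s + min (cylinderTop β s v) a / β ^ s) := by
  rintro x ⟨hx, hxa⟩
  have hT : (bT β)^[s] x = β ^ s * (x - bConv β x₀ s) := by
    rw [iterate_bT_eq hβ.ne', bConv_eq_of_mem_cylinder hx hx₀]
  have h₀ := iterate_bT_nonneg (β := β) hx.1.1 s
  have h₁ : (bT β)^[s] x ≤ min (cylinderTop β s v) a := le_min (iterate_le_cylinderTop hx) hxa.le
  rw [hT] at h₀ h₁
  have hβs : 0 < β ^ s := by positivity
  constructor
  · linarith [nonneg_of_mul_nonneg_right h₀ hβs]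
  · rw [← le_div_iff₀' hβs] at h₁; linarith

lemma volume_cylinder_inter_iterate_lt (hβ : 0 < β) (s : ℕ) (v : Fin s → ℤ) (a : ℝ) :
    volume (cylinder β s v ∩ {x | (bT β)^[s] x < a}) =
      ENNReal.ofReal (min (cylinderTop β s v) a / β ^ s) := by
  rcases (cylinder β s v).eq_empty_or_nonempty with h | ⟨x₀, hx₀⟩
  · have htop : cylinderTop β s v = 0 := by simp [cylinderTop, h]
    rw [h, empty_inter, measure_empty, eq_comm, ENNReal.ofReal_eq_zero, htop]
    exact div_nonpos_of_nonpos_of_nonneg (min_le_left _ _) (by positivity)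
  · refine le_antisymm ?_ ?_
    · calc _ ≤ _ := measure_mono (cylinder_inter_subset_Icc hβ hx₀ a)
        _ = _ := by rw [Real.volume_Icc, add_sub_cancel_left]
    · calc _ = _ := by rw [Real.volume_Ico, add_sub_cancel_left]
        _ ≤ _ := measure_mono (Ico_subset_cylinder_inter hβ hx₀ a)

lemma volume_cylinder (hβ : 0 < β) (s : ℕ) (v : Fin s → ℤ) :
    volume (cylinder β s v) = ENNReal.ofReal (cylinderTop β s v / β ^ s) := by
  have h : cylinder β s v ∩ {x | (bT β)^[s] x < 1} = cylinder β s v :=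
    inter_eq_left.2 fun x hx => (iterate_bT_mem_Ico hx.1 s).2
  rw [← h, volume_cylinder_inter_iterate_lt hβ, min_eq_left (cylinderTop_le_one s v)]

lemma ofReal_mul_volume_cylinder_le (hβ : 0 < β) (s : ℕ) (v : Fin s → ℤ) {c : ℝ} (hc₀ : 0 ≤ c)
    (hc₁ : c ≤ 1) :
    ENNReal.ofReal c * volume (cylinder β s v) ≤
      volume (cylinder β s v ∩ {x | (bT β)^[s] x < c}) := by
  rw [volume_cylinder hβ, volume_cylinder_inter_iterate_lt hβ, ← ENNReal.ofReal_mul hc₀,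
    ← mul_div_assoc]
  gcongr
  exact le_min (mul_le_of_le_one_left (cylinderTop_nonneg s v) hc₁)
    (mul_le_of_le_one_right hc₀ (cylinderTop_le_one s v))

end Cylinders

section Counting

variable {β : ℝ}

open scoped Classical in
noncomputable def admissibleWords (β : ℝ) (s : ℕ) : Finset (Fin s → ℤ) :=
  (Fintype.piFinset fun _ => Finset.Icc 0 ⌊β⌋).filter fun v => (cylinder β s v).Nonempty

lemma mem_admissibleWords {s : ℕ} {v : Fin s → ℤ} :
    v ∈ admissibleWords β s ↔ (∀ i, v i ∈ Finset.Icc 0 ⌊β⌋) ∧ (cylinder β s v).Nonempty := by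
  classical
  simp [admissibleWords, Fintype.mem_piFinset]

lemma bWord_mem_admissibleWords (hβ : 0 ≤ β) {x : ℝ} (hx : x ∈ Ico (0 : ℝ) 1) (s : ℕ) :
    bWord β s x ∈ admissibleWords β s :=
  mem_admissibleWords.2 ⟨fun i => bDigit_mem_Icc hβ hx i, x, hx, rfl⟩

lemma volume_Ico_inter_eq_sum (hβ : 0 ≤ β) (s : ℕ) {A : Set ℝ} (hA : MeasurableSet A) :
    volume (Ico (0 : ℝ) 1 ∩ A) = ∑ v ∈ admissibleWords β s, volume (cylinder β s v ∩ A) := by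
  have h : Ico (0 : ℝ) 1 ∩ A = ⋃ v ∈ admissibleWords β s, cylinder β s v ∩ A := by
    ext x
    simp only [mem_inter_iff, mem_iUnion, exists_prop]
    constructor
    · rintro ⟨hx, hxA⟩
      exact ⟨_, bWord_mem_admissibleWords hβ hx s, ⟨hx, rfl⟩, hxA⟩
    · rintro ⟨v, -, hx, hxA⟩
      exact ⟨hx.1, hxA⟩
  rw [h, measure_biUnion_finset]
  · intro v _ w _ hvw
    exact disjoint_left.2 fun x hv hw => hvw (hv.1.2.symm.trans hw.1.2)
  · exact fun v _ => (measurableSet_cylinder β s v).inter hA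

lemma sum_cylinderTop (hβ : 0 < β) (s : ℕ) :
    ∑ v ∈ admissibleWords β s, cylinderTop β s v = β ^ s := by
  have h := volume_Ico_inter_eq_sum hβ.le s MeasurableSet.univ
  simp only [inter_univ, Real.volume_Ico, sub_zero, ENNReal.ofReal_one, volume_cylinder hβ] at h
  rw [← ENNReal.ofReal_sum_of_nonneg fun v _ => div_nonneg (cylinderTop_nonneg s v)
    (by positivity), eq_comm, ENNReal.ofReal_eq_one, ← Finset.sum_div,
    div_eq_one_iff_eq (by positivity)] at h
  exact h

lemma admissibleWords_succ_subset (hβ : 0 ≤ β) (s : ℕ) :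
    admissibleWords β (s + 1) ⊆ (admissibleWords β s).biUnion fun w =>
      (Finset.Icc 0 ⌊β * cylinderTop β s w⌋).image (Fin.snoc w) := by
  intro v hv
  obtain ⟨hv, x, hx⟩ := mem_admissibleWords.1 hv
  have hxv : ∀ i : Fin (s + 1), bDigit β x i = v i := congrFun hx.2
  have hinit : x ∈ cylinder β s (Fin.init v) := ⟨hx.1, funext fun i => hxv i.castSucc⟩
  refine Finset.mem_biUnion.2 ⟨Fin.init v, mem_admissibleWords.2 ⟨fun i => hv _, x, hinit⟩,
    Finset.mem_image.2 ⟨v (Fin.last s), ?_, Fin.snoc_init_self v⟩⟩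
  rw [← hxv]
  exact Finset.mem_Icc.2 ⟨bDigit_nonneg hβ hx.1.1 s,
    Int.floor_le_floor (mul_le_mul_of_nonneg_left (iterate_le_cylinderTop hinit) hβ)⟩

/-- Each admissible word of length `s` has at most `⌊β * cylinderTop⌋ + 1` admissible
extensions, and the tops add up to `β ^ s`. -/
lemma card_admissibleWords_succ_le (hβ : 0 < β) (s : ℕ) :
    ((admissibleWords β (s + 1)).card : ℝ) ≤ β ^ (s + 1) + (admissibleWords β s).card := by
  calc ((admissibleWords β (s + 1)).card : ℝ)
      ≤ ∑ w ∈ admissibleWords β s, ((Finset.Icc 0 ⌊β * cylinderTop β s w⌋).card : ℝ) := by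
        exact_mod_cast (Finset.card_le_card (admissibleWords_succ_subset hβ.le s)).trans
          (Finset.card_biUnion_le.trans (Finset.sum_le_sum fun w _ => Finset.card_image_le))
    _ ≤ ∑ w ∈ admissibleWords β s, (β * cylinderTop β s w + 1) := by
        gcongr with w
        have h0 : 0 ≤ ⌊β * cylinderTop β s w⌋ :=
          Int.floor_nonneg.2 (mul_nonneg hβ.le (cylinderTop_nonneg s w))
        rw [Int.card_Icc, sub_zero, ← Int.cast_natCast, Int.toNat_of_nonneg (by omega)]
        push_cast
        linarith [Int.floor_le (β * cylinderTop β s w)]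
    _ = β ^ (s + 1) + (admissibleWords β s).card := by
        rw [Finset.sum_add_distrib, ← Finset.mul_sum, sum_cylinderTop hβ, Finset.sum_const,
          nsmul_one, pow_succ']

lemma card_admissibleWords_le (hβ : 1 < β) (s : ℕ) :
    ((admissibleWords β s).card : ℝ) ≤ β ^ (s + 1) / (β - 1) := by
  have hβ₁ : 0 < β - 1 := by linarith
  induction s with
  | zero =>
    have h : ((admissibleWords β 0).card : ℝ) ≤ 1 := by
      exact_mod_cast Finset.card_le_one.2 fun _ _ _ _ => Subsingleton.elim _ _
    rw [le_div_iff₀ hβ₁, zero_add, pow_one]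
    nlinarith
  | succ s ih =>
    calc ((admissibleWords β (s + 1)).card : ℝ) ≤ β ^ (s + 1) + (admissibleWords β s).card :=
          card_admissibleWords_succ_le (by linarith) s
      _ ≤ β ^ (s + 1) + β ^ (s + 1) / (β - 1) := by gcongr
      _ = β ^ (s + 1 + 1) / (β - 1) := by field_simp; ring

lemma volume_Ico_inter_iterate_lt_le (hβ : 1 < β) (s : ℕ) {a : ℝ} (ha : 0 ≤ a) :
    volume (Ico (0 : ℝ) 1 ∩ {x | (bT β)^[s] x < a}) ≤ ENNReal.ofReal (β / (β - 1) * a) := by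
  have hβ₀ : 0 < β := by linarith
  rw [volume_Ico_inter_eq_sum hβ₀.le s (measurableSet_lt (measurable_iterate_bT β s)
    measurable_const)]
  calc ∑ v ∈ admissibleWords β s, volume (cylinder β s v ∩ {x | (bT β)^[s] x < a})
      ≤ ∑ _v ∈ admissibleWords β s, ENNReal.ofReal (a / β ^ s) := by
        gcongr with v
        rw [volume_cylinder_inter_iterate_lt hβ₀]
        gcongr
        exact min_le_right _ _
    _ = ENNReal.ofReal ((admissibleWords β s).card * (a / β ^ s)) := by
        rw [Finset.sum_const, nsmul_eq_mul, ENNReal.ofReal_mul (Nat.cast_nonneg _),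
          ENNReal.ofReal_natCast]
    _ ≤ ENNReal.ofReal (β ^ (s + 1) / (β - 1) * (a / β ^ s)) := by
        gcongr
        exact card_admissibleWords_le hβ s
    _ = ENNReal.ofReal (β / (β - 1) * a) := by
        congr 1
        field_simp
        ring

theorem ae_eventually_rpow_neg_le_iterate (hβ : 1 < β) {γ : ℝ} (hγ : 1 < γ) :
    ∀ᵐ x ∂volume.restrict (Ico (0 : ℝ) 1), ∀ᶠ n : ℕ in atTop, (n : ℝ) ^ (-γ) ≤ (bT β)^[n] x := by
  set s : ℕ → Set ℝ := fun n => {x | (bT β)^[n] x < (n : ℝ) ^ (-γ)}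
  have hbound : ∀ n : ℕ, 0 ≤ β / (β - 1) * (n : ℝ) ^ (-γ) := fun n =>
    mul_nonneg (div_nonneg (by linarith) (by linarith)) (Real.rpow_nonneg n.cast_nonneg _)
  have hsum : ∑' n, volume.restrict (Ico (0 : ℝ) 1) (s n) ≠ ∞ := by
    refine ne_top_of_le_ne_top
      (ENNReal.ofReal_ne_top (r := ∑' n : ℕ, β / (β - 1) * (n : ℝ) ^ (-γ))) ?_
    rw [ENNReal.ofReal_tsum_of_nonneg hbound
      ((Real.summable_nat_rpow.2 (by linarith)).mul_left _)]
    refine ENNReal.tsum_le_tsum fun n => ?_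
    rw [Measure.restrict_apply (measurableSet_lt (measurable_iterate_bT β n) measurable_const),
      inter_comm]
    exact volume_Ico_inter_iterate_lt_le hβ n (Real.rpow_nonneg n.cast_nonneg _)
  filter_upwards [ae_eventually_notMem hsum] with x hx
  filter_upwards [hx] with n hn
  simpa [s] using hn

end Counting

section DigitFiltration

variable {β : ℝ}

noncomputable abbrev digitAlgebra (β : ℝ) (n : ℕ) : MeasurableSpace ℝ :=
  MeasurableSpace.comap (bWord β n) ⊤

lemma digitAlgebra_mono (β : ℝ) {n m : ℕ} (h : n ≤ m) : digitAlgebra β n ≤ digitAlgebra β m := by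
  rintro _ ⟨S, -, rfl⟩
  exact ⟨(fun v i => v (Fin.castLE h i)) ⁻¹' S, trivial, rfl⟩

lemma digitAlgebra_le (β : ℝ) (n : ℕ) : digitAlgebra β n ≤ Real.measurableSpace := by
  rintro _ ⟨S, -, rfl⟩
  exact measurable_bWord β n S.to_countable.measurableSet

noncomputable def digitFiltration (β : ℝ) {S : ℕ → ℕ} (hS : Monotone S) :
    Filtration ℕ Real.measurableSpace where
  seq n := digitAlgebra β (S n)
  mono' _ _ h := digitAlgebra_mono β (hS h)
  le' n := digitAlgebra_le β (S n)

lemma measurableSet_digitAlgebra_iterate_lt (hβ : 1 < β) {s : ℕ} (hs : 0 < s) (k : ℕ) :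
    MeasurableSet[digitAlgebra β (s + k)] {x | (bT β)^[s] x < (β ^ k)⁻¹} := by
  refine ⟨{v | ∀ j : Fin (s + k), s ≤ j → v j = 0}, trivial, ?_⟩
  ext x
  simp only [mem_preimage, mem_ofPred_eq]
  rw [← forall_bDigit_eq_zero_iff hβ (iterate_bT_mem_Ico_of_pos hs) k]
  constructor
  · intro h j hj
    rw [← bDigit_add]
    exact h ⟨s + j, by omega⟩ (Nat.le_add_right s j)
  · intro h j hj
    obtain ⟨i, hi⟩ := Nat.exists_eq_add_of_le hj
    show bDigit β x j = 0
    rw [hi, bDigit_add]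
    exact h i (by omega)

lemma ofReal_mul_le_restrict_iterate_lt_inter (hβ : 0 < β) {t : ℕ} {B : Set ℝ}
    (hB : MeasurableSet[digitAlgebra β t] B) {c : ℝ} (hc₀ : 0 ≤ c) (hc₁ : c ≤ 1) :
    ENNReal.ofReal c * volume.restrict (Ico (0 : ℝ) 1) B ≤
      volume.restrict (Ico (0 : ℝ) 1) ({x | (bT β)^[t] x < c} ∩ B) := by
  have hB' : MeasurableSet B := digitAlgebra_le β t B hB
  obtain ⟨S, -, rfl⟩ := hB
  have hA : MeasurableSet {x | (bT β)^[t] x < c} :=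
    measurableSet_lt (measurable_iterate_bT β t) measurable_const
  rw [Measure.restrict_apply hB', Measure.restrict_apply (hA.inter hB'), inter_comm,
    volume_Ico_inter_eq_sum hβ.le t hB', inter_comm,
    volume_Ico_inter_eq_sum hβ.le t (hA.inter hB'), Finset.mul_sum]
  gcongr with v
  by_cases hv : v ∈ S
  · have hsub : cylinder β t v ⊆ bWord β t ⁻¹' S := fun x hx =>
      show bWord β t x ∈ S from (show bWord β t x = v from hx.2) ▸ hv
    rw [inter_eq_left.2 hsub, ← inter_assoc, inter_right_comm, inter_eq_left.2 hsub]
    exact ofReal_mul_volume_cylinder_le hβ t v hc₀ hc₁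
  · have hempty : cylinder β t v ∩ bWord β t ⁻¹' S = ∅ :=
      (disjoint_left.2 fun x (hx : x ∈ cylinder β t v) hxS =>
        hv ((show bWord β t x = v from hx.2) ▸ hxS)).inter_eq
    rw [hempty, measure_empty, mul_zero]
    exact zero_le

end DigitFiltration

section Windows

variable {β δ : ℝ}

noncomputable def windowLength (β δ : ℝ) (m : ℕ) : ℕ := ⌊δ * logb β (m + 1)⌋₊ + 1

noncomputable def windowStart (β δ : ℝ) (m : ℕ) : ℕ := (m + 1) * windowLength β δ m

lemma windowLength_mono (hβ : 1 < β) (hδ : 0 ≤ δ) : Monotone (windowLength β δ) := by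
  intro m n h
  unfold windowLength
  gcongr

lemma windowStart_mono (hβ : 1 < β) (hδ : 0 ≤ δ) : Monotone (windowStart β δ) :=
  fun _ _ h => Nat.mul_le_mul (Nat.succ_le_succ h) (windowLength_mono hβ hδ h)

lemma windowStart_add_windowLength_le (hβ : 1 < β) (hδ : 0 ≤ δ) (m : ℕ) :
    windowStart β δ m + windowLength β δ m ≤ windowStart β δ (m + 1) := by
  have h := windowLength_mono hβ hδ (Nat.le_succ m)
  simp only [windowStart]
  nlinarith

lemma lt_windowStart (m : ℕ) : m < windowStart β δ m :=
  Nat.lt_of_lt_of_le (Nat.lt_succ_self m) (Nat.le_mul_of_pos_right _ (Nat.succ_pos _))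

lemma rpow_lt_pow_windowLength (hβ : 1 < β) (m : ℕ) :
    ((m : ℝ) + 1) ^ δ < β ^ windowLength β δ m := by
  rw [rpow_eq_rpow_mul_logb (by linarith) hβ.ne' (by positivity), ← Real.rpow_natCast]
  apply Real.rpow_lt_rpow_of_exponent_lt hβ
  push_cast [windowLength]
  exact Nat.lt_floor_add_one _

lemma pow_windowLength_le (hβ : 1 < β) (hδ : 0 ≤ δ) (m : ℕ) :
    β ^ windowLength β δ m ≤ β * ((m : ℝ) + 1) ^ δ := by
  have hlog : 0 ≤ δ * logb β (m + 1) :=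
    mul_nonneg hδ (Real.logb_nonneg hβ (by simp))
  rw [rpow_eq_rpow_mul_logb (by linarith) hβ.ne' (by positivity), windowLength, pow_succ',
    ← Real.rpow_natCast]
  gcongr
  · exact hβ.le
  · exact Nat.floor_le hlog

lemma not_summable_inv_pow_windowLength (hβ : 1 < β) (hδ₀ : 0 ≤ δ) (hδ₁ : δ ≤ 1) :
    ¬Summable fun m => (β ^ windowLength β δ (m + 1))⁻¹ := by
  intro h
  have hβ₀ : 0 < β := by linarith
  have hg : Summable fun m : ℕ => 1 / |(m : ℝ) + 1| ^ δ := by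
    refine Summable.of_nonneg_of_le (fun m => by positivity) (fun m => ?_)
      (((summable_nat_add_iff (f := fun m => (β ^ windowLength β δ m)⁻¹) 1).1 h).mul_left
        β)
    rw [abs_of_pos (by positivity), ← div_eq_mul_inv, div_le_div_iff₀ (by positivity)
      (by positivity), one_mul]
    exact pow_windowLength_le hβ hδ₀ m
  exact absurd ((Real.summable_one_div_nat_add_rpow 1 δ).1 hg) (not_lt.2 hδ₁)

lemma eventually_windowLength_le_rpow (hβ : 1 < β) (hδ : 0 ≤ δ) {η : ℝ} (hη : 0 < η) :
    ∀ᶠ m : ℕ in atTop, (windowLength β δ m : ℝ) ≤ ((m : ℝ) + 1) ^ η := by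
  have hlog : (fun x : ℝ => δ * logb β x) =o[atTop] fun x => x ^ η := by
    simpa only [Real.logb, mul_div_assoc', div_mul_eq_mul_div] using
      (isLittleO_log_rpow_atTop hη).const_mul_left (δ / log β)
  have hone : (fun _ : ℝ => (1 : ℝ)) =o[atTop] fun x => x ^ η :=
    (Asymptotics.isLittleO_one_left_iff ℝ).2
      (tendsto_norm_atTop_atTop.comp (tendsto_rpow_atTop hη))
  have hm : Tendsto (fun m : ℕ => (m : ℝ) + 1) atTop atTop :=
    tendsto_atTop_add_const_right _ 1 tendsto_natCast_atTop_atTop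
  filter_upwards [hm.eventually ((hlog.add hone).bound one_pos)] with m hm
  have hfloor : (⌊δ * logb β (m + 1)⌋₊ : ℝ) ≤ δ * logb β (m + 1) :=
    Nat.floor_le (mul_nonneg hδ (Real.logb_nonneg hβ (by simp)))
  simp only [one_mul, Real.norm_eq_abs, abs_of_nonneg (by positivity : (0 : ℝ) ≤ (m + 1) ^ η)]
    at hm
  push_cast [windowLength]
  linarith [le_abs_self (δ * logb β ((m : ℝ) + 1) + 1)]

lemma eventually_inv_pow_windowLength_le (hβ : 1 < β) {γ : ℝ} (hγ : 0 < γ) (hγδ : γ < δ) :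
    ∀ᶠ m in atTop, (β ^ windowLength β δ m)⁻¹ ≤ (windowStart β δ m : ℝ) ^ (-γ) := by
  have hη : 0 < (δ - γ) / γ := div_pos (sub_pos.2 hγδ) hγ
  filter_upwards [eventually_windowLength_le_rpow hβ (hγ.trans hγδ).le hη] with m hm
  have hS : (windowStart β δ m : ℝ) ^ γ ≤ ((m : ℝ) + 1) ^ δ := by
    calc (windowStart β δ m : ℝ) ^ γ = ((m : ℝ) + 1) ^ γ * (windowLength β δ m : ℝ) ^ γ := by
          rw [windowStart]; push_cast; exact Real.mul_rpow (by positivity) (by positivity)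
      _ ≤ ((m : ℝ) + 1) ^ γ * (((m : ℝ) + 1) ^ ((δ - γ) / γ)) ^ γ := by gcongr
      _ = ((m : ℝ) + 1) ^ δ := by
          rw [← Real.rpow_mul (by positivity), div_mul_cancel₀ _ hγ.ne',
            ← Real.rpow_add (by positivity), add_sub_cancel]
  have hpos : (0 : ℝ) < windowStart β δ m := by
    exact_mod_cast (Nat.zero_le m).trans_lt (lt_windowStart m)
  rw [Real.rpow_neg hpos.le]
  exact inv_anti₀ (Real.rpow_pos_of_pos hpos γ) (hS.trans (rpow_lt_pow_windowLength hβ m).le)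

end Windows

theorem ae_frequently_iterate_lt_rpow_neg {β : ℝ} (hβ : 1 < β) {γ : ℝ} (hγ₀ : 0 < γ)
    (hγ₁ : γ < 1) :
    ∀ᵐ x ∂volume.restrict (Ico (0 : ℝ) 1), ∃ᶠ n : ℕ in atTop, (bT β)^[n] x < (n : ℝ) ^ (-γ) := by
  set δ := (1 + γ) / 2
  have hδ₀ : 0 ≤ δ := by positivity
  have hγδ : γ < δ := by simp only [δ]; linarith
  have hδ₁ : δ ≤ 1 := by simp only [δ]; linarith
  set w := windowLength β δ
  set S := windowStart β δ
  have hevents := ae_frequently_mem_of_not_summable (μ := volume.restrict (Ico (0 : ℝ) 1))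
    (ℱ := digitFiltration β fun _ _ h => windowStart_mono hβ hδ₀ (Nat.succ_le_succ h))
    (s := fun m => {x | (bT β)^[S m] x < (β ^ w m)⁻¹}) (p := fun m => (β ^ w (m + 1))⁻¹)
    (fun m => digitAlgebra_mono β (windowStart_add_windowLength_le hβ hδ₀ m) _
      (measurableSet_digitAlgebra_iterate_lt hβ ((Nat.zero_le m).trans_lt (lt_windowStart m))
        (w m)))
    (fun m => by positivity) (not_summable_inv_pow_windowLength hβ hδ₀ hδ₁)
    (fun m B hB => ofReal_mul_le_restrict_iterate_lt_inter (by linarith) hB (by positivity)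
      (inv_le_one_of_one_le₀ (one_le_pow₀ hβ.le)))
  have hS : Tendsto S atTop atTop := tendsto_atTop_mono (fun m => (lt_windowStart m).le) tendsto_id
  filter_upwards [hevents] with x hx
  exact hS.frequently ((hx.and_eventually (eventually_inv_pow_windowLength_le hβ hγ₀ hγδ)).mono
    fun m h => h.1.trans_le h.2)

theorem stmt17 (β : ℝ) (hβ : 1 < β) :
    ∀ᵐ x ∂(volume.restrict (Set.Ico (0:ℝ) 1)),
      Filter.liminf (fun n : ℕ => Real.log ((bT β)^[n] x) / Real.log n) Filter.atTop = -1 := by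
  set ε : ℕ → ℝ := fun j => 1 / ((j : ℝ) + 2)
  have hε₀ : ∀ j, 0 < ε j := fun j => by positivity
  have hε₁ : ∀ j, ε j < 1 := fun j =>
    (div_lt_one (by positivity)).2 (by linarith [j.cast_nonneg (α := ℝ)])
  have hε : Tendsto ε atTop (𝓝 0) :=
    tendsto_const_nhds.div_atTop (tendsto_atTop_add_const_right _ 2 tendsto_natCast_atTop_atTop)
  have hlow := ae_all_iff.2 fun j =>
    ae_eventually_rpow_neg_le_iterate hβ (γ := 1 + ε j) (by linarith [hε₀ j])
  have hup := ae_all_iff.2 fun j =>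
    ae_frequently_iterate_lt_rpow_neg hβ (γ := 1 - ε j) (by linarith [hε₁ j]) (by linarith [hε₀ j])
  filter_upwards [hlow, hup] with x hlow hup
  have hpos : ∀ᶠ n : ℕ in atTop, 0 < (bT β)^[n] x ∧ (1 : ℝ) < n := by
    filter_upwards [hlow 0, eventually_ge_atTop 2] with n h hn
    exact ⟨(Real.rpow_pos_of_pos (by positivity) _).trans_le h, by exact_mod_cast hn⟩
  simp only [Real.log_div_log]
  refine liminf_eq_of_eventually_of_frequently hε (fun j => ?_) (fun j => ?_)
  · filter_upwards [hlow j, hpos] with n h ⟨hT, hn⟩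
    rw [sub_eq_add_neg, ← neg_add, Real.le_logb_iff_rpow_le hn hT]
    exact h
  · refine ((hup j).and_eventually hpos).mono fun n ⟨h, hT, hn⟩ => ?_
    rw [Real.logb_le_iff_le_rpow hn hT, show -1 + ε j = -(1 - ε j) by ring]
    exact h.le
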